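/- arXiv:1607.08363 — 2 statements merged into one kernel-verified Lean document; each statement's English description precedes it below -/
import Mathlib

section
/- If two contract automata 𝒜₁ and 𝒜₂ are collaborative and safe (so that co(A₁ʳ) ⊆ A₁ᵒ and co(A₂ʳ) ⊆ A₂ᵒ), then they are competitive: (A₁ᵒ ∩ co(A₂ʳ)) ∪ (co(A₁ʳ) ∩ A₂ᵒ) ≠ ∅ together with co(Aᵢʳ) ⊆ Aᵢᵒ (i = 1,2) implies A₁ᵒ ∩ A₂ᵒ ∩ (co(A₁ʳ) ∪ co(A₂ʳ)) ≠ ∅. -/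
/-- Collaborative and safe implies competitive: if
`(A₁ᵒ ∩ co(A₂ʳ)) ∪ (co(A₁ʳ) ∩ A₂ᵒ) ≠ ∅` and `co(Aᵢʳ) ⊆ Aᵢᵒ` for `i = 1,2`
(the consequence of safety), then
`A₁ᵒ ∩ A₂ᵒ ∩ (co(A₁ʳ) ∪ co(A₂ʳ)) ≠ ∅`. -/
theorem collaborative_safe_implies_competitive {α : Type} (co : α → α)
    (A1r A2r A1o A2o : Set α)
    (hcollaborative : ((A1o ∩ (co '' A2r)) ∪ ((co '' A1r) ∩ A2o)).Nonempty)
    (hsafe1 : co '' A1r ⊆ A1o) (hsafe2 : co '' A2r ⊆ A2o) :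
    (A1o ∩ A2o ∩ ((co '' A1r) ∪ (co '' A2r))).Nonempty := by
  obtain ⟨x, hx⟩ := hcollaborative
  rcases hx with ⟨h1, h2⟩ | ⟨h1, h2⟩
  · exact ⟨x, ⟨h1, hsafe2 h2⟩, Or.inr h2⟩
  · exact ⟨x, ⟨hsafe1 h1, h2⟩, Or.inl h1⟩
end

section
/- A contract automaton 𝒜 admits weak agreement if and only if max γ ≥ 0, where the maximum is over real γ and integer flows x ∈ F_{q₀,q_f} subject to Σ_{t∈T} aⁱ_t x_t ≥ γ for every request action index i; here aⁱ_t is +1 if transition t carries an offer on action i, −1 if it carries a request on action i, and 0 otherwise. -/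
/-- The net flow at state `q`: inflow (over the backward star of `q`) minus
outflow (over the forward star of `q`). -/
def netFlow {Q Act R : Type} [DecidableEq Q] [AddCommGroup R]
    (T : Finset (Q × Act × Q)) (x : Q × Act × Q → R) (q : Q) : R :=
  (∑ t ∈ T.filter (fun t => t.2.2 = q), x t) -
    ∑ t ∈ T.filter (fun t => t.1 = q), x t

/-- `x` is a valid flow from `q0` to `qf` on the transitions `T`: it is
supported on `T`, satisfies flow conservation (net flow −1 at the source `q0`,
+1 at the sink `qf`, 0 elsewhere), and, for every state `q ≠ q0` with positive
outgoing flow, there is an auxiliary real flow `z` dominated edgewise by `x`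
carrying one unit from `q0` to `q` (the connectivity constraints). -/
def IsFlow {Q Act : Type} [DecidableEq Q] (T : Finset (Q × Act × Q))
    (q0 qf : Q) (x : Q × Act × Q → ℕ) : Prop :=
  (∀ t, t ∉ T → x t = 0) ∧
  (∀ q : Q, netFlow T (fun t => (x t : ℤ)) q
      = if q = q0 then -1 else if q = qf then 1 else 0) ∧
  (∀ q : Q, q ≠ q0 → 0 < ∑ t ∈ T.filter (fun t => t.1 = q), x t →
    ∃ z : Q × Act × Q → ℝ,
      (∀ t, 0 ≤ z t ∧ z t ≤ (x t : ℝ)) ∧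
      ∀ q' : Q, netFlow T z q'
          = if q' = q0 then -1 else if q' = q then 1 else 0)

/-- `l` is a run (walk) of the automaton from `q0` to `qf`: a nonempty list of
transitions of `T`, consecutively chained, starting at `q0` and ending at `qf`. -/
def IsRun {Q Act : Type} (T : Finset (Q × Act × Q)) (q0 qf : Q)
    (l : List (Q × Act × Q)) : Prop :=
  (∀ t ∈ l, t ∈ T) ∧ l.Chain' (fun s t => s.2.2 = t.1) ∧
  ∃ h : l ≠ [], (l.head h).1 = q0 ∧ (l.getLast h).2.2 = qf

/-!
Taking `γ = 0`, the left-hand side asks for a flow `x ∈ F_{q₀,q_f}` with `∑ₜ aⁱₜ xₜ ≥ 0` for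
every `i`, and `∑ₜ aⁱₜ xₜ` is the offers-minus-requests balance of any run whose transition counts
are `x`. So everything rests on flow decomposition: the transition-count vectors of the runs
`q₀ → q_f` are exactly the flows in `F_{q₀,q_f}`.

A run's count vector is conserved, and its prefixes are the connectivity witnesses. Conversely, a
flow `x` is rebuilt one transition at a time while keeping a walk `q₀ → m` and a walk `m' → q_f`
whose joint counts stay below `x`. If `m ≠ m'` the residual flow leaves `m`; if the halves meet but
`x` is not exhausted, a cut argument on the connectivity witnesses yields a residual transition out
of an already visited state, where the walk is split open again.
-/

open Finset

section NetFlow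
variable {Q Act R : Type} [DecidableEq Q] {T : Finset (Q × Act × Q)}

theorem netFlow_add [AddCommGroup R] (x y : Q × Act × Q → R) :
    netFlow T (x + y) = netFlow T x + netFlow T y := by
  ext q
  simp only [netFlow, Pi.add_apply, sum_add_distrib]
  abel

theorem netFlow_sub [AddCommGroup R] (x y : Q × Act × Q → R) :
    netFlow T (x - y) = netFlow T x - netFlow T y := by
  ext q
  simp only [netFlow, Pi.sub_apply, sum_sub_distrib]
  abel

theorem netFlow_single [DecidableEq Act] [AddCommGroupWithOne R] {e : Q × Act × Q}
    (he : e ∈ T) : netFlow T (Pi.single e (1 : R)) = Pi.single e.2.2 1 - Pi.single e.1 1 := by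
  ext q
  simp [netFlow, Pi.single_apply, he, eq_comm]

theorem exists_pos_of_netFlow_neg [AddCommGroup R] [PartialOrder R] [IsOrderedAddMonoid R]
    {x : Q × Act × Q → R} (hx : ∀ t, 0 ≤ x t) {q : Q} (hq : netFlow T x q < 0) :
    ∃ e ∈ T, e.1 = q ∧ 0 < x e := by
  by_contra! h
  have hout : ∑ t ∈ T with t.1 = q, x t = 0 :=
    sum_eq_zero fun t ht =>
      ((hx t).eq_of_not_lt (h t (mem_filter.1 ht).1 (mem_filter.1 ht).2)).symm
  have hin : 0 ≤ ∑ t ∈ T with t.2.2 = q, x t := sum_nonneg fun t _ => hx t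
  simp only [netFlow, hout, sub_zero] at hq
  exact hq.not_ge hin

theorem ite_neg_one_eq_single_sub_single [AddGroupWithOne R] {s f : Q} (h : s ≠ f) :
    (fun q => if q = s then (-1 : R) else if q = f then 1 else 0)
      = Pi.single f 1 - Pi.single s 1 := by
  ext q
  by_cases hs : q = s <;> by_cases hf : q = f <;> simp_all

theorem sum_netFlow_eq [AddCommGroup R] (x : Q × Act × Q → R) (S : Finset Q) :
    ∑ q ∈ S, netFlow T x q = ∑ t ∈ T with t.2.2 ∈ S, x t - ∑ t ∈ T with t.1 ∈ S, x t := by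
  simp only [netFlow, sum_sub_distrib, sum_fiberwise_eq_sum_filter]

end NetFlow

theorem sum_map_eq_sum_count_smul {α M : Type} [BEq α] [LawfulBEq α] [AddCommMonoid M]
    {s : Finset α} {l : List α} (hl : ∀ a ∈ l, a ∈ s) (g : α → M) :
    (l.map g).sum = ∑ a ∈ s, l.count a • g a := by
  induction l with
  | nil => simp
  | cons b l ih =>
    have hb : b ∈ s := hl b List.mem_cons_self
    simp only [List.map_cons, List.sum_cons, List.count_cons, add_smul, sum_add_distrib,
      ← ih fun a ha => hl a (List.mem_cons_of_mem b ha), ite_smul, one_smul, zero_smul]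
    rw [sum_eq_single_of_mem b hb fun a _ hab => if_neg (by rw [beq_iff_eq]; exact Ne.symm hab),
      if_pos (beq_self_eq_true b), add_comm]

theorem length_le_sum_of_count_le {α : Type} [BEq α] [LawfulBEq α] {s : Finset α}
    {x : α → ℕ} (hs : ∀ a ∉ s, x a = 0) {l : List α} (hx : ∀ a, l.count a ≤ x a) :
    l.length ≤ ∑ a ∈ s, x a := by
  have hl : ∀ a ∈ l, a ∈ s := fun a ha => by_contra fun h =>
    (List.count_pos_iff.2 ha).ne' (Nat.le_zero.1 (hs a h ▸ hx a))
  have := sum_map_eq_sum_count_smul hl (fun _ => 1)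
  simp only [List.map_const', List.sum_replicate, smul_eq_mul, mul_one] at this
  exact this ▸ sum_le_sum fun a _ => hx a

theorem map_sum_le_map_sum_iff {α : Type} [BEq α] [LawfulBEq α] {s : Finset α} {l : List α}
    (hl : ∀ a ∈ l, a ∈ s) (g h : α → ℕ) :
    (l.map g).sum ≤ (l.map h).sum ↔ 0 ≤ ∑ a ∈ s, ((h a : ℤ) - g a) * l.count a := by
  simp only [sub_mul, sum_sub_distrib, sub_nonneg, sum_map_eq_sum_count_smul hl, smul_eq_mul]
  norm_cast
  simp only [mul_comm]

inductive IsWalk {Q Act : Type} (T : Finset (Q × Act × Q)) :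
    Q → Q → List (Q × Act × Q) → Prop
  | nil (q : Q) : IsWalk T q q []
  | cons {f : Q} {l : List (Q × Act × Q)} {e : Q × Act × Q} (he : e ∈ T) :
      IsWalk T e.2.2 f l → IsWalk T e.1 f (e :: l)

namespace IsWalk
variable {Q Act : Type} {T : Finset (Q × Act × Q)} {s m f : Q} {l l₁ l₂ : List (Q × Act × Q)}

theorem append (h₁ : IsWalk T s m l₁) (h₂ : IsWalk T m f l₂) : IsWalk T s f (l₁ ++ l₂) := by
  induction h₁ with
  | nil => exact h₂
  | cons he _ ih => exact .cons he (ih h₂)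

theorem concat (h : IsWalk T s m l) {e : Q × Act × Q} (he : e ∈ T) (hm : e.1 = m) :
    IsWalk T s e.2.2 (l ++ [e]) :=
  h.append (hm ▸ .cons he (.nil _))

theorem mem (h : IsWalk T s f l) {t : Q × Act × Q} (ht : t ∈ l) : t ∈ T := by
  induction h with
  | nil => simp at ht
  | cons he _ ih => exact (List.mem_cons.1 ht).elim (· ▸ he) ih

theorem exists_split_of_mem (h : IsWalk T s f l) {e : Q × Act × Q} (he : e ∈ l) :
    ∃ l₁ l₂, l = l₁ ++ e :: l₂ ∧ IsWalk T s e.1 l₁ ∧ IsWalk T e.2.2 f l₂ := by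
  induction h with
  | nil => simp at he
  | @cons _ _ e' he' h ih =>
    obtain rfl | he := List.mem_cons.1 he
    · exact ⟨[], _, rfl, .nil _, h⟩
    · obtain ⟨l₁, l₂, rfl, h₁, h₂⟩ := ih he
      exact ⟨e' :: l₁, l₂, rfl, .cons he' h₁, h₂⟩

theorem exists_edge_leaving {V : Q → Prop} (h : IsWalk T s f l) (hs : V s) (hf : ¬ V f) :
    ∃ t ∈ l, V t.1 ∧ ¬ V t.2.2 := by
  induction h with
  | nil => exact absurd hs hf
  | @cons _ _ e _ _ ih =>
    by_cases he : V e.2.2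
    · obtain ⟨t, ht, hV⟩ := ih he hf
      exact ⟨t, List.mem_cons_of_mem e ht, hV⟩
    · exact ⟨e, List.mem_cons_self, hs, he⟩

theorem nil_iff : IsWalk T s f [] ↔ s = f :=
  ⟨fun h => by cases h; rfl, fun h => h ▸ .nil s⟩

theorem cons_iff {e : Q × Act × Q} :
    IsWalk T s f (e :: l) ↔ e ∈ T ∧ e.1 = s ∧ IsWalk T e.2.2 f l :=
  ⟨fun h => by cases h with | cons he h => exact ⟨he, rfl, h⟩,
    fun ⟨he, hs, h⟩ => hs ▸ .cons he h⟩

theorem isRun_iff : IsRun T s f l ↔ l ≠ [] ∧ IsWalk T s f l := by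
  induction l generalizing s with
  | nil => simp [IsRun]
  | cons e l ih =>
    cases l with
    | nil => simp [IsRun, List.Chain', cons_iff, nil_iff, eq_comm, and_comm]
    | cons e' l =>
      have := @ih e.2.2
      simp only [IsRun, List.Chain', List.isChain_cons_cons, List.mem_cons, forall_eq_or_imp,
        Prod.forall, List.head_cons, List.getLast_cons, ne_eq, reduceCtorEq, not_false_eq_true,
        exists_true_left, exists_and_left, exists_const, cons_iff, true_and]
        at this ⊢
      constructor
      · rintro ⟨⟨he, hl⟩, ⟨hc, hch⟩, hs, hf⟩
        exact ⟨he, hs, this.1 ⟨hl, hch, hc.symm, hf⟩⟩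
      · rintro ⟨he, hs, h⟩
        obtain ⟨hl, hch, hc, hf⟩ := this.2 h
        exact ⟨⟨he, hl⟩, ⟨hc.symm, hch⟩, hs, hf⟩

theorem netFlow_count [DecidableEq Q] [DecidableEq Act] {R : Type} [AddCommGroupWithOne R]
    (h : IsWalk T s f l) :
    netFlow T (fun t => (l.count t : R)) = Pi.single f 1 - Pi.single s 1 := by
  induction h with
  | nil => ext q; simp [netFlow]
  | @cons f l e he _ ih =>
    have : (fun t => ((e :: l).count t : R)) = (fun t => (l.count t : R)) + Pi.single e 1 := by
      ext t
      rcases eq_or_ne t e with rfl | h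
      · simp
      · simp [h, h.symm]
    rw [this, netFlow_add, ih, netFlow_single he]
    abel

end IsWalk

section Reach
variable {Q Act : Type} [DecidableEq Q] {T : Finset (Q × Act × Q)} {q0 qf : Q}

theorem exists_walk_pos_of_netFlow {R : Type} [Ring R] [LinearOrder R] [IsStrictOrderedRing R]
    {z : Q × Act × Q → R} (hz : ∀ t, 0 ≤ z t) {s v : Q}
    (hflow : netFlow T z = Pi.single v 1 - Pi.single s 1) :
    ∃ p, IsWalk T s v p ∧ ∀ t ∈ p, 0 < z t := by
  classical
  by_contra hv
  -- No `z`-positive transition leaves the set `S` of states reachable along such transitions,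
  -- yet the net flow into `S` is `-1`.
  let P : Q → Prop := fun u => ∃ p, IsWalk T s u p ∧ ∀ t ∈ p, 0 < z t
  let S := (insert s (T.image fun t => t.2.2)).filter P
  have hs : s ∈ S := mem_filter.2 ⟨mem_insert_self _ _, [], .nil s, by simp⟩
  have hvS : v ∉ S := fun h => hv (mem_filter.1 h).2
  have hclosed : ∀ t ∈ T, t.1 ∈ S → 0 < z t → t.2.2 ∈ S := by
    intro t ht h1 hzt
    obtain ⟨p, hp, hpos⟩ := (mem_filter.1 h1).2
    refine mem_filter.2 ⟨mem_insert_of_mem (mem_image_of_mem _ ht), p ++ [t], hp.concat ht rfl, ?_⟩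
    simpa [or_imp, forall_and, hzt] using hpos
  have hcut : ∑ t ∈ T with t.1 ∈ S, z t ≤ ∑ t ∈ T with t.2.2 ∈ S, z t := by
    rw [sum_filter, sum_filter]
    refine sum_le_sum fun t ht => ?_
    by_cases h1 : t.1 ∈ S
    · rcases (hz t).eq_or_lt with h0 | hpos
      · simp [← h0]
      · simp [h1, hclosed t ht h1 hpos]
    · rw [if_neg h1]
      exact ite_nonneg (hz t) le_rfl
  have hsum : ∑ t ∈ T with t.2.2 ∈ S, z t - ∑ t ∈ T with t.1 ∈ S, z t = -1 := by
    simp [← sum_netFlow_eq, hflow, sum_sub_distrib, hs, hvS]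
  exact (neg_one_lt_zero : (-1 : R) < 0).not_ge (hsum ▸ sub_nonneg.2 hcut)

theorem IsFlow.exists_walk_pos {x : Q × Act × Q → ℕ} (hx : IsFlow T q0 qf x)
    {e : Q × Act × Q} (he : e ∈ T) (hxe : 0 < x e) :
    ∃ p, IsWalk T q0 e.1 p ∧ ∀ t ∈ p, 0 < x t := by
  rcases eq_or_ne e.1 q0 with h | h
  · exact ⟨[], h ▸ .nil _, by simp⟩
  have hout : 0 < ∑ t ∈ T with t.1 = e.1, x t :=
    hxe.trans_le (single_le_sum (fun _ _ => Nat.zero_le _) (mem_filter.2 ⟨he, rfl⟩))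
  obtain ⟨z, hz, hzflow⟩ := hx.2.2 e.1 h hout
  rw [← funext_iff, ite_neg_one_eq_single_sub_single h.symm] at hzflow
  obtain ⟨p, hp, hpos⟩ := exists_walk_pos_of_netFlow (fun t => (hz t).1) hzflow
  exact ⟨p, hp, fun t ht => Nat.cast_pos.1 ((hpos t ht).trans_le (hz t).2)⟩

end Reach

section Decomposition
variable {Q Act : Type} [DecidableEq Q] [DecidableEq Act] {T : Finset (Q × Act × Q)}
  {x : Q × Act × Q → ℕ} {s f m m' : Q} {a b : List (Q × Act × Q)}

theorem netFlow_sub_count_append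
    (hflow : netFlow T (fun t => (x t : ℤ)) = Pi.single f 1 - Pi.single s 1)
    (ha : IsWalk T s m a) (hb : IsWalk T m' f b) :
    netFlow T (fun t => (x t : ℤ) - (a ++ b).count t) = Pi.single m' 1 - Pi.single m 1 := by
  have : (fun t => (x t : ℤ) - (a ++ b).count t)
      = (fun t => (x t : ℤ)) - (fun t => (a.count t : ℤ)) - fun t => (b.count t : ℤ) := by
    ext t
    simp only [List.count_append, Nat.cast_add, Pi.sub_apply]
    ring
  rw [this, netFlow_sub, netFlow_sub, hflow, ha.netFlow_count, hb.netFlow_count]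
  abel

theorem exists_residual_edge_and_split (hsupp : ∀ t ∉ T, x t = 0)
    (hflow : netFlow T (fun t => (x t : ℤ)) = Pi.single f 1 - Pi.single s 1)
    (hreach : ∀ e ∈ T, 0 < x e → ∃ p, IsWalk T s e.1 p ∧ ∀ t ∈ p, 0 < x t)
    (ha : IsWalk T s m a) (hb : IsWalk T m' f b) (hle : ∀ t, (a ++ b).count t ≤ x t)
    (hgap : m ≠ m' ∨ ∃ t, (a ++ b).count t ≠ x t) :
    ∃ e ∈ T, (a ++ b).count e < x e ∧
      ∃ a₁ b₁ m₁, a₁ ++ b₁ = a ++ b ∧ IsWalk T s e.1 a₁ ∧ IsWalk T m₁ f b₁ := by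
  rcases eq_or_ne m m' with rfl | hm
  · obtain ⟨t, ht⟩ := hgap.resolve_left (not_not.2 rfl)
    have htx : (a ++ b).count t < x t := (hle t).lt_of_ne ht
    have htT : t ∈ T := by_contra fun h => by simp [hsupp t h] at htx
    let V : Q → Prop := fun v => ∃ a₁ b₁, a₁ ++ b₁ = a ++ b ∧ IsWalk T s v a₁ ∧ IsWalk T v f b₁
    suffices ∃ e ∈ T, (a ++ b).count e < x e ∧ V e.1 by
      obtain ⟨e, heT, hex, a₁, b₁, hab, ha₁, hb₁⟩ := this
      exact ⟨e, heT, hex, a₁, b₁, e.1, hab, ha₁, hb₁⟩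
    by_cases htV : V t.1
    · exact ⟨t, htT, htx, htV⟩
    obtain ⟨p, hp, hpos⟩ := hreach t htT (by omega)
    obtain ⟨e, hep, heV, heV'⟩ :=
      hp.exists_edge_leaving (V := V) ⟨[], a ++ b, rfl, .nil s, ha.append hb⟩ htV
    have hnot : e ∉ a ++ b := fun he => heV' <| by
      obtain ⟨l₁, l₂, hl, h₁, h₂⟩ := (ha.append hb).exists_split_of_mem he
      exact ⟨l₁ ++ [e], l₂, by simp [hl], h₁.concat (hp.mem hep) rfl, h₂⟩
    exact ⟨e, hp.mem hep, by rw [List.count_eq_zero.2 hnot]; exact hpos e hep, heV⟩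
  · have hres := congrFun (netFlow_sub_count_append hflow ha hb) m
    obtain ⟨e, heT, hem, he⟩ := exists_pos_of_netFlow_neg (T := T)
      (x := fun t => (x t : ℤ) - (a ++ b).count t)
      (fun t => sub_nonneg.2 (by exact_mod_cast hle t))
      (by rw [hres]; simp [hm])
    exact ⟨e, heT, by omega, a, b, m', rfl, hem ▸ ha, hb⟩

theorem exists_walk_count_eq (hsupp : ∀ t ∉ T, x t = 0)
    (hflow : netFlow T (fun t => (x t : ℤ)) = Pi.single f 1 - Pi.single s 1)
    (hreach : ∀ e ∈ T, 0 < x e → ∃ p, IsWalk T s e.1 p ∧ ∀ t ∈ p, 0 < x t)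
    (ha : IsWalk T s m a) (hb : IsWalk T m' f b) (hle : ∀ t, (a ++ b).count t ≤ x t) :
    ∃ l, IsWalk T s f l ∧ ∀ t, l.count t = x t := by
  induction hn : ∑ t ∈ T, x t - (a ++ b).length using Nat.strong_induction_on
    generalizing a b m m' with
  | _ n ih =>
  by_cases hdone : m = m' ∧ ∀ t, (a ++ b).count t = x t
  · obtain ⟨rfl, hcount⟩ := hdone
    exact ⟨a ++ b, ha.append hb, hcount⟩
  obtain ⟨e, heT, hex, a₁, b₁, m₁, hab, ha₁, hb₁⟩ :=
    exists_residual_edge_and_split hsupp hflow hreach ha hb hle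
      (by simpa [or_iff_not_imp_left] using hdone)
  have hcount : ∀ t, (a₁ ++ [e] ++ b₁).count t = (a ++ b).count t + if e = t then 1 else 0 := by
    intro t
    rw [← hab, List.append_assoc, List.singleton_append, List.perm_middle.count_eq,
      List.count_cons]
    simp
  have hle' : ∀ t, (a₁ ++ [e] ++ b₁).count t ≤ x t := by
    intro t
    rw [hcount]
    split_ifs with h
    · exact h ▸ hex
    · exact (add_zero _).trans_le (hle t)
  have hlen : (a₁ ++ [e] ++ b₁).length = (a ++ b).length + 1 := by
    simp only [← hab, List.length_append, List.length_cons, List.length_nil]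
    omega
  have hbound := length_le_sum_of_count_le hsupp hle'
  exact ih _ (by omega) (ha₁.concat heT rfl) hb₁ hle' rfl

end Decomposition

section Runs
variable {Q Act : Type} [DecidableEq Q] [DecidableEq Act] {T : Finset (Q × Act × Q)}
  {q0 qf : Q}

theorem IsFlow.exists_isRun_count_eq (hne : q0 ≠ qf) {x : Q × Act × Q → ℕ}
    (hx : IsFlow T q0 qf x) : ∃ l, IsRun T q0 qf l ∧ ∀ t, l.count t = x t := by
  have hflow : netFlow T (fun t => (x t : ℤ)) = Pi.single qf 1 - Pi.single q0 1 := by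
    rw [← ite_neg_one_eq_single_sub_single hne]
    exact funext hx.2.1
  obtain ⟨l, hl, hcount⟩ := exists_walk_count_eq hx.1 hflow
    (fun e he hxe => hx.exists_walk_pos he hxe) (.nil q0) (.nil qf) (by simp)
  refine ⟨l, IsWalk.isRun_iff.2 ⟨?_, hl⟩, hcount⟩
  rintro rfl
  exact hne (IsWalk.nil_iff.1 hl)

theorem IsRun.isFlow_count (hne : q0 ≠ qf) {l : List (Q × Act × Q)} (hl : IsRun T q0 qf l) :
    IsFlow T q0 qf fun t => l.count t := by
  have hw := (IsWalk.isRun_iff.1 hl).2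
  refine ⟨fun t ht => List.count_eq_zero.2 fun h => ht (hw.mem h), fun q => ?_, ?_⟩
  · rw [hw.netFlow_count, ← ite_neg_one_eq_single_sub_single hne]
  intro q hq hout
  obtain ⟨e, he, hel⟩ := exists_ne_zero_of_sum_ne_zero hout.ne'
  obtain ⟨heT, rfl⟩ := mem_filter.1 he
  obtain ⟨l₁, l₂, rfl, h₁, -⟩ :=
    hw.exists_split_of_mem (List.count_pos_iff.1 (Nat.pos_of_ne_zero hel))
  refine ⟨fun t => (l₁.count t : ℝ), fun t => ⟨by positivity, ?_⟩, fun q' => ?_⟩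
  · exact Nat.cast_le.2 ((List.sublist_append_left l₁ _).count_le t)
  · rw [h₁.netFlow_count, ← ite_neg_one_eq_single_sub_single (Ne.symm hq)]

end Runs

theorem admits_weak_agreement_iff_lp_general {Q Act I : Type}
    [DecidableEq Q]
    (T : Finset (Q × Act × Q)) (q0 qf : Q) (hne : q0 ≠ qf)
    (offs reqs : Act → I → ℕ) :
    (∃ γ : ℝ, 0 ≤ γ ∧ ∃ x : Q × Act × Q → ℕ, IsFlow T q0 qf x ∧
        ∀ i : I,
          γ ≤ ((∑ t ∈ T, ((offs t.2.1 i : ℤ) - (reqs t.2.1 i : ℤ)) * (x t : ℤ) : ℤ) : ℝ))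
      ↔
    (∃ l : List (Q × Act × Q), IsRun T q0 qf l ∧
        ∀ i : I, (l.map (fun t => reqs t.2.1 i)).sum ≤ (l.map (fun t => offs t.2.1 i)).sum) := by
  classical
  have agree_iff : ∀ l, IsRun T q0 qf l → ∀ i : I,
      ((l.map fun t => reqs t.2.1 i).sum ≤ (l.map fun t => offs t.2.1 i).sum ↔
        0 ≤ ∑ t ∈ T, ((offs t.2.1 i : ℤ) - reqs t.2.1 i) * l.count t) :=
    fun l hl i => map_sum_le_map_sum_iff (fun _ => (IsWalk.isRun_iff.1 hl).2.mem) _ _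
  constructor
  · rintro ⟨γ, hγ, x, hx, hγx⟩
    obtain ⟨l, hl, hcount⟩ := hx.exists_isRun_count_eq hne
    refine ⟨l, hl, fun i => (agree_iff l hl i).2 ?_⟩
    simp only [hcount]
    exact_mod_cast hγ.trans (hγx i)
  · rintro ⟨l, hl, hagree⟩
    exact ⟨0, le_rfl, _, hl.isFlow_count hne, fun i => mod_cast (agree_iff l hl i).1 (hagree i)⟩

/-- A contract automaton `T` (with single initial state `q0` and single final
state `qf`, requests indexed by `i : I`, and `offs act i` / `reqs act i`
counting the offers/requests on action `i` carried by the label `act`) admits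
weak agreement if and only if `max γ ≥ 0` in the linear program whose
variables are a valid flow `x ∈ F_{q0,qf}` and `γ ∈ ℝ`, subject to
`∑_t aⁱ_t x_t ≥ γ` for every `i`, where `aⁱ_t = offs − reqs ∈ {+1,−1,0}`. -/
theorem admits_weak_agreement_iff_lp {Q Act I : Type} [Fintype Q]
    [DecidableEq Q] [DecidableEq Act] [Fintype I]
    (T : Finset (Q × Act × Q)) (q0 qf : Q) (hne : q0 ≠ qf)
    (offs reqs : Act → I → ℕ) :
    (∃ γ : ℝ, 0 ≤ γ ∧ ∃ x : Q × Act × Q → ℕ, IsFlow T q0 qf x ∧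
        ∀ i : I,
          γ ≤ ((∑ t ∈ T, ((offs t.2.1 i : ℤ) - (reqs t.2.1 i : ℤ)) * (x t : ℤ) : ℤ) : ℝ))
      ↔
    (∃ l : List (Q × Act × Q), IsRun T q0 qf l ∧
        ∀ i : I, (l.map (fun t => reqs t.2.1 i)).sum ≤ (l.map (fun t => offs t.2.1 i)).sum) :=
  admits_weak_agreement_iff_lp_general T q0 qf hne offs reqs
end
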